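/- Let α = [0;1+d₁,\overline{d₂,…,dₙ}] be a Sturm number of type (i) (dₙ ≥ d₁ ≥ 1), with standard sequence (sₖ) and associated standard morphism σ. Then for every integer m ≥ 1, σ^m(a) = s_{m(n−1)} and σ^m(b) = s_{m(n−1)}^{dₙ−d₁} s_{m(n−1)−1}. -/

import Mathlib

/-- The two-letter alphabet 𝒜 = {a, b}. -/
inductive AB : Type
  | a : AB
  | b : AB
deriving DecidableEq, Repr

/-- Apply a morphism (determined by its images on the letters) to a finite word. -/
def applyM (g : AB → List AB) (w : List AB) : List AB := w.flatMap g

/-- The exchange morphism E : a ↦ b, b ↦ a. -/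
def Em : AB → List AB
  | AB.a => [AB.b]
  | AB.b => [AB.a]

/-- The morphism φ : a ↦ ab, b ↦ a. -/
def phim : AB → List AB
  | AB.a => [AB.a, AB.b]
  | AB.b => [AB.a]

/-- Composition of morphisms: `compM g h` applies `h` first, then `g`. -/
def compM (g h : AB → List AB) : AB → List AB := fun c => applyM g (h c)

/-- Powers of a morphism. -/
def mpow (g : AB → List AB) : ℕ → AB → List AB
  | 0 => fun c => [c]
  | n + 1 => compM g (mpow g n)

/-- A morphism is standard iff it is a composition of E and φ (in any number and order). -/
inductive IsStandard : (AB → List AB) → Prop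
  | id : IsStandard (fun c => [c])
  | compE {ψ : AB → List AB} : IsStandard ψ → IsStandard (compM ψ Em)
  | compPhi {ψ : AB → List AB} : IsStandard ψ → IsStandard (compM ψ phim)

/-- `IsRightConj ψ ξ k` : ξ is the k-th right conjugate of ψ, i.e. there is a word u
of length k with ψ(w)u = uξ(w) for all finite words w. -/
def IsRightConj (ψ ξ : AB → List AB) (k : ℕ) : Prop :=
  ∃ u : List AB, u.length = k ∧ ∀ w : List AB, applyM ψ w ++ u = u ++ applyM ξ w

/-- w^k (power of a finite word under concatenation). -/
def lpow (w : List AB) : ℕ → List AB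
  | 0 => []
  | k + 1 => w ++ lpow w k

/-- Standard sequence associated with a directive sequence (d₁, d₂, …) (here `d`
is indexed so that `d i` is dᵢ for i ≥ 1): `sseq d 0 = s₋₁ = b`, `sseq d (n+1) = sₙ`,
with s₀ = a and sₙ = sₙ₋₁^{dₙ} sₙ₋₂. -/
def sseq (d : ℕ → ℕ) : ℕ → List AB
  | 0 => [AB.b]
  | 1 => [AB.a]
  | n + 2 => lpow (sseq d (n + 1)) (d (n + 1)) ++ sseq d n

/-- Convergent denominators: `qseq d n` = qₙ = |sₙ| (q₀ = 1, q₁ = 1 + d₁,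
qₙ = dₙqₙ₋₁ + qₙ₋₂). -/
def qseq (d : ℕ → ℕ) : ℕ → ℕ
  | 0 => 1
  | 1 => 1 + d 1
  | n + 2 => d (n + 2) * qseq d (n + 1) + qseq d n

/-- `PrefInf u x` : the finite word u is a prefix of the infinite word x. -/
def PrefInf (u : List AB) (x : ℕ → AB) : Prop :=
  ∀ i, i < u.length → u.getD i AB.a = x i

/-- Image of an infinite word under a (non-erasing) morphism, letter by letter. -/
def applyInf (g : AB → List AB) (x : ℕ → AB) : ℕ → AB :=
  fun i => (applyM g ((List.range (i + 1)).map x)).getD i AB.a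

/-- `IsProdInf u x` : the infinite word x is the infinite product u 0 · u 1 · u 2 ⋯,
i.e. every finite partial product is a prefix of x. -/
def IsProdInf (u : ℕ → List AB) (x : ℕ → AB) : Prop :=
  ∀ n, PrefInf (((List.range n).map u).flatten) x

/-- Adjoining singular words: `vword d k` is the adjoining singular word v_{k-1}
(so `vword d 0 = v₋₁`), where vₙ = a·sₙ₊₁^{d_{n+2}−1}sₙ·b⁻¹ for n odd and
vₙ = b·sₙ₊₁^{d_{n+2}−1}sₙ·a⁻¹ for n even. -/
def vword (d : ℕ → ℕ) (k : ℕ) : List AB :=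
  (if k % 2 = 0 then AB.a else AB.b) ::
    (lpow (sseq d (k + 1)) (d (k + 1) - 1) ++ sseq d k).dropLast

/-- Singular words: `wword d k` is the singular word w_{k-2}
(w₋₂ = ε, w₋₁ = a, w₀ = b, and wₙ = a·sₙ·b⁻¹ for n ≥ 1 odd, wₙ = b·sₙ·a⁻¹ for n even). -/
def wword (d : ℕ → ℕ) : ℕ → List AB
  | 0 => []
  | 1 => [AB.a]
  | 2 => [AB.b]
  | k + 3 =>
      (if (k + 1) % 2 = 1 then AB.a else AB.b) :: (sseq d (k + 2)).dropLast

/-- The standard morphism σ associated with a type (i) Sturm number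
α = [0;1+d₁,\overline{d₂,…,dₙ}] : σ(a) = sₙ₋₁, σ(b) = sₙ₋₁^{dₙ−d₁} sₙ₋₂. -/
def sigmaGen (d : ℕ → ℕ) (n : ℕ) : AB → List AB
  | AB.a => sseq d n
  | AB.b => lpow (sseq d n) (d n - d 1) ++ sseq d (n - 1)

/-- The directive sequence of α = [0;2,\overline{r}] : d₁ = 1, dᵢ = r for i ≥ 2. -/
def dseq (r : ℕ) : ℕ → ℕ := fun i => if i ≤ 1 then 1 else r

/-- The directive sequence of 1 − α = [0;1,d₁,\overline{d₂,…,dₙ}] obtained from that of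
α = [0;1+d₁,\overline{d₂,…,dₙ}] : ê₁ = 0 and êᵢ = dᵢ₋₁ for i ≥ 2. -/
def dhat (d : ℕ → ℕ) : ℕ → ℕ := fun i => if i ≤ 1 then 0 else d (i - 1)

/-- `Generates ψ c x` : ψ is prolongable on the letter c and x = ψ^ω(c), i.e. every
ψ^m(c) is a prefix of x. -/
def Generates (ψ : AB → List AB) (c : AB) (x : ℕ → AB) : Prop :=
  (∃ w : List AB, w ≠ [] ∧ ψ c = c :: w) ∧ ∀ m, PrefInf (mpow ψ m c) x

/-- Fibonacci numbers, shifted: `fibw k = F_{k-1}`, so fibw 0 = F₋₁ = 1,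
fibw 1 = F₀ = 1, Fₙ = Fₙ₋₁ + Fₙ₋₂. -/
def fibw : ℕ → ℕ
  | 0 => 1
  | 1 => 1
  | n + 2 => fibw (n + 1) + fibw n

/-- `HasCF γ a` : γ has continued fraction expansion [0; a 1, a 2, a 3, …]. -/
def HasCF (γ : ℝ) (a : ℕ → ℕ) : Prop :=
  ∃ x : ℕ → ℝ, x 0 = γ ∧ (∀ i, 0 < x i ∧ x i < 1) ∧
    ∀ i, 1 / x i = (a (i + 1) : ℝ) + x (i + 1)

/-- γ has a continued fraction expansion of type (i):
γ = [0;1+d₁,\overline{d₂,…,dₙ}] < 1/2 with dₙ ≥ d₁ ≥ 1. -/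
def CFTypeI (γ : ℝ) : Prop :=
  ∃ a : ℕ → ℕ, HasCF γ a ∧ γ < 1 / 2 ∧
    ∃ n : ℕ, 2 ≤ n ∧ ∃ d : ℕ → ℕ,
      (∀ i, 1 ≤ i → 1 ≤ d i) ∧ a 1 = 1 + d 1 ∧ (∀ i, 2 ≤ i → a i = d i) ∧
      (∀ i, 2 ≤ i → d (i + (n - 1)) = d i) ∧ d 1 ≤ d n

/-- γ has a continued fraction expansion of type (ii):
γ = [0;1,d₁,\overline{d₂,…,dₙ}] > 1/2 with dₙ ≥ d₁. -/
def CFTypeII (γ : ℝ) : Prop :=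
  ∃ a : ℕ → ℕ, HasCF γ a ∧ 1 / 2 < γ ∧
    ∃ n : ℕ, 2 ≤ n ∧ ∃ d : ℕ → ℕ,
      (∀ i, 1 ≤ i → 1 ≤ d i) ∧ a 1 = 1 ∧ (∀ i, 2 ≤ i → a i = d (i - 1)) ∧
      (∀ i, 2 ≤ i → d (i + (n - 1)) = d i) ∧ d 1 ≤ d n

/-- A Sturm number: an irrational γ ∈ (0,1) whose continued fraction expansion is of
type (i) or type (ii). -/
def IsSturmNumber (γ : ℝ) : Prop :=
  Irrational γ ∧ 0 < γ ∧ γ < 1 ∧ (CFTypeI γ ∨ CFTypeII γ)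

/-!
σ shifts the standard sequence by n − 1. Indeed σ(s₀) = sₙ₋₁ by definition, and since
d₁ ≤ dₙ also σ(s₁) = σ(a^{d₁}b) = sₙ₋₁^{dₙ}sₙ₋₂ = sₙ. Because the directive sequence is
(n − 1)-periodic from index 2 on, σ maps the recurrence sⱼ = sⱼ₋₁^{dⱼ}sⱼ₋₂ onto the
recurrence for sⱼ₊ₙ₋₁, so σ(sⱼ) = sⱼ₊ₙ₋₁ for all j ≥ 0. Iterating this shift on
σ(a) = sₙ₋₁ and σ(b) = sₙ₋₁^{dₙ−d₁}sₙ₋₂ gives the formulas for σᵐ.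
-/

lemma applyM_append (g : AB → List AB) (u v : List AB) :
    applyM g (u ++ v) = applyM g u ++ applyM g v :=
  List.flatMap_append

lemma applyM_singleton (g : AB → List AB) (c : AB) : applyM g [c] = g c := by
  simp [applyM]

lemma applyM_lpow (g : AB → List AB) (w : List AB) (k : ℕ) :
    applyM g (lpow w k) = lpow (applyM g w) k := by
  induction k with
  | zero => rfl
  | succ k ih => simp only [lpow, applyM_append, ih]

lemma lpow_add (w : List AB) (j k : ℕ) : lpow w (j + k) = lpow w j ++ lpow w k := by
  induction j with
  | zero => simp [lpow]
  | succ j ih => simp [Nat.succ_add, lpow, ih]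

lemma mpow_succ_apply (g : AB → List AB) (m : ℕ) (c : AB) :
    mpow g (m + 1) c = applyM g (mpow g m c) :=
  rfl

section Shift

variable {d : ℕ → ℕ} {p : ℕ}

lemma applyM_sseq_eq_of_periodic {g : AB → List AB}
    (hper : ∀ i, 2 ≤ i → d (i + p) = d i)
    (h₀ : g AB.a = sseq d (p + 1)) (h₁ : applyM g (sseq d 2) = sseq d (p + 2)) :
    ∀ j, applyM g (sseq d (j + 1)) = sseq d (j + p + 1) := by
  intro j
  induction j using Nat.twoStepInduction with
  | zero => simpa [sseq, applyM_singleton] using h₀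
  | one => simpa [Nat.add_comm 1 p] using h₁
  | more j ih₀ ih₁ =>
    have hd : d (j + p + 2) = d (j + 2) := by
      rw [← hper (j + 2) (by omega)]; ring_nf
    calc applyM g (sseq d (j + 2 + 1))
        = lpow (applyM g (sseq d (j + 1 + 1))) (d (j + 2)) ++ applyM g (sseq d (j + 1)) := by
          simp only [sseq, applyM_append, applyM_lpow]
      _ = lpow (sseq d (j + p + 2)) (d (j + p + 2)) ++ sseq d (j + p + 1) := by
          rw [ih₁, ih₀, hd]; ring_nf
      _ = sseq d (j + 2 + p + 1) := by
          rw [show j + 2 + p + 1 = (j + p + 1) + 2 by omega]; rfl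

lemma applyM_sigmaGen_sseq_two (hdn : d 1 ≤ d (p + 1)) :
    applyM (sigmaGen d (p + 1)) (sseq d 2) = sseq d (p + 2) := by
  have hsplit : d (p + 1) = d 1 + (d (p + 1) - d 1) := by omega
  simp only [sseq, applyM_append, applyM_lpow, applyM_singleton, sigmaGen,
    ← List.append_assoc, ← lpow_add, Nat.add_sub_cancel, ← hsplit]

lemma applyM_sigmaGen_sseq (hper : ∀ i, 2 ≤ i → d (i + p) = d i)
    (hdn : d 1 ≤ d (p + 1)) (j : ℕ) :
    applyM (sigmaGen d (p + 1)) (sseq d (j + 1)) = sseq d (j + p + 1) :=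
  applyM_sseq_eq_of_periodic hper rfl (applyM_sigmaGen_sseq_two hdn) j

lemma mpow_sigmaGen_a (hper : ∀ i, 2 ≤ i → d (i + p) = d i)
    (hdn : d 1 ≤ d (p + 1)) (m : ℕ) :
    mpow (sigmaGen d (p + 1)) m AB.a = sseq d (m * p + 1) := by
  induction m with
  | zero => simp [mpow, sseq]
  | succ m ih =>
    rw [mpow_succ_apply, ih, applyM_sigmaGen_sseq hper hdn, Nat.succ_mul]

lemma mpow_sigmaGen_b (hper : ∀ i, 2 ≤ i → d (i + p) = d i)
    (hdn : d 1 ≤ d (p + 1)) (hp : 1 ≤ p) (m : ℕ) :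
    mpow (sigmaGen d (p + 1)) (m + 1) AB.b =
      lpow (sseq d ((m + 1) * p + 1)) (d (p + 1) - d 1) ++ sseq d ((m + 1) * p) := by
  induction m with
  | zero => simp [mpow, compM, applyM_singleton, sigmaGen]
  | succ m ih =>
    obtain ⟨j, hj⟩ : ∃ j, (m + 1) * p = j + 1 :=
      ⟨_, (Nat.succ_pred_eq_of_pos (Nat.mul_pos m.succ_pos hp)).symm⟩
    rw [mpow_succ_apply, ih, applyM_append, applyM_lpow, hj,
      applyM_sigmaGen_sseq hper hdn, applyM_sigmaGen_sseq hper hdn,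
      show (m + 1 + 1) * p = j + p + 1 by rw [Nat.succ_mul, hj]; omega,
      Nat.add_right_comm j 1 p]

end Shift

theorem statement6_general (n : ℕ) (hn : 2 ≤ n) (d : ℕ → ℕ)
    (hper : ∀ i, 2 ≤ i → d (i + (n - 1)) = d i)
    (hdn : d 1 ≤ d n) :
    ∀ m : ℕ, 1 ≤ m →
      mpow (sigmaGen d n) m AB.a = sseq d (m * (n - 1) + 1) ∧
      mpow (sigmaGen d n) m AB.b =
        lpow (sseq d (m * (n - 1) + 1)) (d n - d 1) ++ sseq d (m * (n - 1)) := by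
  obtain ⟨p, rfl⟩ : ∃ p, n = p + 1 := ⟨n - 1, by omega⟩
  rw [Nat.add_sub_cancel] at hper ⊢
  rintro m hm
  obtain ⟨m, rfl⟩ : ∃ k, m = k + 1 := ⟨m - 1, by omega⟩
  exact ⟨mpow_sigmaGen_a hper hdn _, mpow_sigmaGen_b hper hdn (by omega) m⟩

/-- For a type (i) Sturm number α = [0;1+d₁,\overline{d₂,…,dₙ}]
(dₙ ≥ d₁ ≥ 1), for every m ≥ 1: σ^m(a) = s_{m(n−1)} and
σ^m(b) = s_{m(n−1)}^{dₙ−d₁} s_{m(n−1)−1}. (Recall `sseq d (k+1)` is sₖ.) -/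
theorem statement6 (n : ℕ) (hn : 2 ≤ n) (d : ℕ → ℕ)
    (hd : ∀ i, 1 ≤ i → 1 ≤ d i)
    (hper : ∀ i, 2 ≤ i → d (i + (n - 1)) = d i)
    (hdn : d 1 ≤ d n) :
    ∀ m : ℕ, 1 ≤ m →
      mpow (sigmaGen d n) m AB.a = sseq d (m * (n - 1) + 1) ∧
      mpow (sigmaGen d n) m AB.b =
        lpow (sseq d (m * (n - 1) + 1)) (d n - d 1) ++ sseq d (m * (n - 1)) :=
  statement6_general n hn d hper hdn
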